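/- For every odd integer n > 1, the congruence sum_{k=0}^{(n+1)/2} [4k-1] (q^{-1};q^2)_k^4 / (q^2;q^2)_k^4 · q^{4k} ≡ -(1+3q+q^2)[n]^4 (mod [n]^4 Φ_n(q)) holds, i.e., the difference of the two sides, cleared of denominators, is divisible by [n]^4 Φ_n(q) in ℚ[q]. -/

import Mathlib

open RatFunc

noncomputable def q : RatFunc ℚ := RatFunc.X

/-- q-shifted factorial `(a;b)_m = ∏_{j=0}^{m-1} (1 - a b^j)`. -/
noncomputable def qpoch (a b : RatFunc ℚ) (m : ℕ) : RatFunc ℚ :=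
  ∏ j ∈ Finset.range m, (1 - a * b ^ j)

/-- q-integer `[m] = (1-q^m)/(1-q)` for an arbitrary integer `m`. -/
noncomputable def qintZ (m : ℤ) : RatFunc ℚ := (1 - q ^ m) / (1 - q)

/-- q-integer `[m] = 1 + q + ⋯ + q^{m-1}`. -/
noncomputable def qint (m : ℕ) : RatFunc ℚ := ∑ i ∈ Finset.range m, q ^ i

/-- q-binomial coefficient `(q;q)_n / ((q;q)_k (q;q)_{n-k})`. -/
noncomputable def qbinom (n k : ℕ) : RatFunc ℚ :=
  qpoch q q n / (qpoch q q k * qpoch q q (n - k))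

/-- the polynomial `[n] = 1 + q + ⋯ + q^{n-1}` in `ℚ[q]` -/
noncomputable def qintP (n : ℕ) : Polynomial ℚ := ∑ i ∈ Finset.range n, Polynomial.X ^ i

/-!
Telescoping gives the partial sums in closed form,
`∑_{k ≤ M} [4k-1] (q⁻¹;q²)_k⁴ / (q²;q²)_k⁴ q^{4k} = -([2M+1]² + q[2M]²) (q;q²)_M⁴ / (q (q²;q²)_M⁴)`.
For `M = (n+1)/2` the last factor `1 - q^n` of `(q;q²)_M` supplies `[n]⁴`. For odd `i < n` the
factors `1 - q^i` of `(q;q²)_M` and `1 - q^{n-i}` of `(q²;q²)_M` share `1 - q^{gcd(i,n)}`; once it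
is cancelled, the cofactors `b_i = (1 - q^{n-i}) / (1 - q^{gcd(i,n)})` left in the denominator
`q [n+1]⁴ ∏ b_i⁴` have no zero at an `n`-th root of unity. At a primitive one `ζ`,
`b_i ζ^i = -a_i` with `a_i = (1 - q^i) / (1 - q^{gcd(i,n)})`, so `ζ ∏ b_i⁴ = ∏ a_i⁴`, and since
`[n+1] = 1`, `[n+2] = 1 + ζ` there, the remaining numerator vanishes at `ζ`.
-/

open Finset Polynomial

section ClosedForm

theorem q_ne_zero : q ≠ 0 := RatFunc.X_ne_zero

theorem one_sub_X_pow_ne_zero {k : ℕ} (hk : k ≠ 0) : (1 - Polynomial.X ^ k : ℚ[X]) ≠ 0 := by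
  intro h
  simpa [hk] using congrArg (eval 0) h

theorem algebraMap_X_eq_q : algebraMap ℚ[X] (RatFunc ℚ) Polynomial.X = q := RatFunc.algebraMap_X

theorem one_sub_q_pow_ne_zero {k : ℕ} (hk : k ≠ 0) : (1 : RatFunc ℚ) - q ^ k ≠ 0 := by
  simpa [q] using RatFunc.algebraMap_ne_zero (one_sub_X_pow_ne_zero hk)

theorem one_sub_q_ne_zero : (1 : RatFunc ℚ) - q ≠ 0 := by
  simpa using one_sub_q_pow_ne_zero one_ne_zero

theorem qint_eq_div (k : ℕ) : qint k = (1 - q ^ k) / (1 - q) := by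
  rw [eq_div_iff one_sub_q_ne_zero, qint, geom_sum_mul_neg]

theorem qintZ_natCast (k : ℕ) : qintZ k = qint k := by
  rw [qintZ, qint_eq_div, zpow_natCast]

theorem qpoch_succ (a b : RatFunc ℚ) (m : ℕ) :
    qpoch a b (m + 1) = qpoch a b m * (1 - a * b ^ m) :=
  prod_range_succ _ _

theorem qpoch_inv_succ (m : ℕ) : qpoch q⁻¹ (q ^ 2) (m + 1) = (1 - q⁻¹) * qpoch q (q ^ 2) m := by
  rw [qpoch, prod_range_succ', qpoch, pow_zero, mul_one, mul_comm]
  congr 1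
  refine prod_congr rfl fun j _ => ?_
  field_simp [q_ne_zero]
  ring

theorem qpoch_sq_ne_zero (m : ℕ) : qpoch (q ^ 2) (q ^ 2) m ≠ 0 :=
  prod_ne_zero_iff.mpr fun j _ => by
    simpa [← pow_mul, ← pow_add] using one_sub_q_pow_ne_zero (k := 2 + 2 * j) (by omega)

theorem sum_eq_closed_form (M : ℕ) :
    ∑ k ∈ range (M + 1),
        qintZ (4 * k - 1) * qpoch q⁻¹ (q ^ 2) k ^ 4 / qpoch (q ^ 2) (q ^ 2) k ^ 4 * q ^ (4 * k)
      = -(qint (2 * M + 1) ^ 2 + q * qint (2 * M) ^ 2) * qpoch q (q ^ 2) M ^ 4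
          / (qpoch (q ^ 2) (q ^ 2) M ^ 4 * q) := by
  have hq := q_ne_zero
  have hq1 := one_sub_q_ne_zero
  induction M with
  | zero =>
    simp only [zero_add, sum_range_one, qpoch, range_zero, prod_empty, sum_empty, one_pow, div_one,
      mul_one, mul_zero, pow_zero, qintZ, qint, CharP.cast_eq_zero, zero_sub, zpow_neg_one]
    field_simp
    ring
  | succ M ih =>
    have hB := qpoch_sq_ne_zero M
    have hB' : 1 - q ^ 2 * (q ^ 2) ^ M ≠ 0 := by
      simpa [← pow_mul, ← pow_add] using one_sub_q_pow_ne_zero (k := 2 + 2 * M) (by omega)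
    rw [sum_range_succ, ih,
      show 4 * ((M + 1 : ℕ) : ℤ) - 1 = ((4 * M + 3 : ℕ) : ℤ) by push_cast; ring,
      qintZ_natCast, qpoch_inv_succ, qpoch_succ, qpoch_succ]
    simp only [qint_eq_div]
    field_simp
    ring

end ClosedForm

section Cofactors

noncomputable def cofactor (g m : ℕ) : ℚ[X] := ∑ t ∈ range (m / g), (Polynomial.X ^ g) ^ t

theorem one_sub_X_pow_mul_cofactor {g m : ℕ} (h : g ∣ m) :
    (1 - Polynomial.X ^ g) * cofactor g m = 1 - Polynomial.X ^ m := by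
  rw [cofactor, mul_neg_geom_sum, ← pow_mul, Nat.mul_div_cancel' h]

theorem one_sub_pow_mul_aeval_cofactor {K : Type*} [CommRing K] [Algebra ℚ K] (z : K) {g m : ℕ}
    (h : g ∣ m) : (1 - z ^ g) * aeval z (cofactor g m) = 1 - z ^ m := by
  simpa using congrArg (aeval z) (one_sub_X_pow_mul_cofactor h)

theorem aeval_cofactor_of_pow_eq_one {K : Type*} [CommRing K] [Algebra ℚ K] {z : K} {g : ℕ}
    (hz : z ^ g = 1) (m : ℕ) : aeval z (cofactor g m) = (m / g : ℕ) := by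
  simp [cofactor, hz]

variable {K : Type*} [Field K] [CharZero K] {n i : ℕ}

theorem aeval_cofactor_sub_ne_zero {z : K} (hz : z ^ n = 1) (hi : i < n) :
    aeval z (cofactor (i.gcd n) (n - i)) ≠ 0 := by
  have hdvd : i.gcd n ∣ n - i := Nat.dvd_sub (Nat.gcd_dvd_right i n) (Nat.gcd_dvd_left i n)
  intro h0
  have hzi : z ^ (n - i) = 1 := by
    have := one_sub_pow_mul_aeval_cofactor z hdvd
    rw [h0, mul_zero] at this
    linear_combination this
  have hzg : z ^ i.gcd n = 1 := by
    rw [← Nat.gcd_self_sub_left hi.le]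
    exact pow_gcd_eq_one.mpr ⟨hzi, hz⟩
  rw [aeval_cofactor_of_pow_eq_one hzg, Nat.cast_eq_zero] at h0
  exact absurd h0 (Nat.div_pos (Nat.le_of_dvd (by omega) hdvd)
    (Nat.gcd_pos_of_pos_right i (by omega))).ne'

theorem aeval_cofactor_sub_mul_pow {ζ : K} (hζ : IsPrimitiveRoot ζ n) (hi0 : 0 < i) (hi : i < n) :
    aeval ζ (cofactor (i.gcd n) (n - i)) * ζ ^ i = -aeval ζ (cofactor (i.gcd n) i) := by
  have hg : 1 - ζ ^ i.gcd n ≠ 0 := sub_ne_zero.mpr (hζ.pow_ne_one_of_pos_of_lt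
    (Nat.gcd_pos_of_pos_left n hi0).ne' ((Nat.gcd_le_left n hi0).trans_lt hi)).symm
  refine mul_left_cancel₀ hg ?_
  rw [mul_neg, ← mul_assoc,
    one_sub_pow_mul_aeval_cofactor ζ (Nat.dvd_sub (Nat.gcd_dvd_right i n) (Nat.gcd_dvd_left i n)),
    one_sub_pow_mul_aeval_cofactor ζ (Nat.gcd_dvd_left i n), sub_mul, one_mul,
    pow_sub_mul_pow ζ hi.le, hζ.pow_eq_one]
  ring

end Cofactors

section Parts

variable {K : Type*} [Field K] [CharZero K]

noncomputable def gcdPart (n : ℕ) : ℚ[X] :=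
  ∏ j ∈ range (n / 2), (1 - Polynomial.X ^ (2 * j + 1).gcd n)

noncomputable def oddPart (n : ℕ) : ℚ[X] :=
  ∏ j ∈ range (n / 2), cofactor ((2 * j + 1).gcd n) (2 * j + 1)

noncomputable def evenPart (n : ℕ) : ℚ[X] :=
  ∏ j ∈ range (n / 2), cofactor ((2 * j + 1).gcd n) (n - (2 * j + 1))

theorem prod_one_sub_X_pow_odd (n : ℕ) :
    ∏ j ∈ range (n / 2), (1 - Polynomial.X ^ (2 * j + 1)) = gcdPart n * oddPart n := by
  rw [gcdPart, oddPart, ← prod_mul_distrib]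
  exact prod_congr rfl fun j _ => (one_sub_X_pow_mul_cofactor (Nat.gcd_dvd_left _ _)).symm

theorem prod_one_sub_X_pow_even {n : ℕ} (hn : Odd n) :
    ∏ j ∈ range (n / 2), (1 - Polynomial.X ^ (2 * j + 2)) = gcdPart n * evenPart n := by
  rw [gcdPart, evenPart, ← prod_mul_distrib, ← prod_range_reflect]
  refine prod_congr rfl fun j hj => ?_
  rw [one_sub_X_pow_mul_cofactor (Nat.dvd_sub (Nat.gcd_dvd_right _ _) (Nat.gcd_dvd_left _ _))]
  obtain ⟨k, rfl⟩ := hn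
  have := mem_range.mp hj
  congr 2
  omega

theorem aeval_evenPart_ne_zero {z : K} {n : ℕ}
    (hz : z ^ n = 1) : aeval z (evenPart n) ≠ 0 := by
  rw [evenPart, map_prod]
  exact prod_ne_zero_iff.mpr fun j hj =>
    aeval_cofactor_sub_ne_zero hz (by have := mem_range.mp hj; omega)

theorem gcdPart_ne_zero (n : ℕ) : gcdPart n ≠ 0 :=
  prod_ne_zero_iff.mpr fun _ _ => one_sub_X_pow_ne_zero (Nat.gcd_pos_of_pos_left n (by omega)).ne'

theorem evenPart_ne_zero (n : ℕ) : evenPart n ≠ 0 := fun h =>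
  aeval_evenPart_ne_zero (one_pow (M := ℚ) n) (by rw [h, map_zero])

theorem sum_range_odd_eq_sq (k : ℕ) : ∑ j ∈ range k, (2 * j + 1) = k ^ 2 := by
  induction k with
  | zero => rfl
  | succ k ih => rw [sum_range_succ, ih]; ring

theorem aeval_oddPart_pow_four {ζ : K} {n : ℕ}
    (hζ : IsPrimitiveRoot ζ n) (hn : Odd n) :
    aeval ζ (oddPart n) ^ 4 = ζ * aeval ζ (evenPart n) ^ 4 := by
  obtain ⟨k, rfl⟩ := hn
  have h1 := hζ.pow_eq_one
  have hpair : aeval ζ (evenPart (2 * k + 1)) * ζ ^ k ^ 2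
      = (-1) ^ k * aeval ζ (oddPart (2 * k + 1)) := by
    rw [evenPart, oddPart, show (2 * k + 1) / 2 = k by omega, map_prod, map_prod,
      ← sum_range_odd_eq_sq, ← prod_pow_eq_pow_sum, ← prod_mul_distrib,
      show (-1 : K) ^ k = (-1) ^ #(range k) by rw [card_range], ← prod_neg]
    exact prod_congr rfl fun j hj =>
      aeval_cofactor_sub_mul_pow hζ (by omega) (by have := mem_range.mp hj; omega)
  have hζ4 : ζ ^ (4 * k ^ 2) = ζ :=
    calc ζ ^ (4 * k ^ 2) = ζ ^ (4 * k ^ 2) * (ζ ^ (2 * k + 1)) ^ 2 := by rw [h1]; ring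
      _ = (ζ ^ (2 * k + 1)) ^ (2 * k + 1) * ζ := by ring
      _ = ζ := by rw [h1]; ring
  calc aeval ζ (oddPart (2 * k + 1)) ^ 4
      = (aeval ζ (evenPart (2 * k + 1)) * ζ ^ k ^ 2) ^ 4 := by
        rw [hpair, mul_pow, ← pow_mul, mul_comm k 4, pow_mul]; norm_num
    _ = ζ * aeval ζ (evenPart (2 * k + 1)) ^ 4 := by
        rw [mul_pow, ← pow_mul, mul_comm _ 4, hζ4]; ring

end Parts

section Divisibility

theorem qintP_succ (k : ℕ) : qintP (k + 1) = qintP k + Polynomial.X ^ k :=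
  sum_range_succ _ _

theorem qintP_mul_one_sub_X (k : ℕ) : qintP k * (1 - Polynomial.X) = 1 - Polynomial.X ^ k :=
  geom_sum_mul_neg _ _

theorem qintP_ne_zero {k : ℕ} (hk : k ≠ 0) : qintP k ≠ 0 := by
  intro h
  simpa [qintP, hk] using congrArg (eval 1) h

theorem aeval_qintP_mul_one_sub {K : Type*} [CommRing K] [Algebra ℚ K] (z : K) (k : ℕ) :
    aeval z (qintP k) * (1 - z) = 1 - z ^ k := by
  simpa [qintP] using geom_sum_mul_neg z k

theorem aeval_qintP_of_isPrimitiveRoot {K : Type*} [Field K] [CharZero K] {ζ : K} {n : ℕ}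
    (hζ : IsPrimitiveRoot ζ n) (hn : 1 < n) : aeval ζ (qintP n) = 0 := by
  simpa [qintP] using hζ.geom_sum_eq_zero hn

noncomputable def diffNum (n : ℕ) : ℚ[X] :=
  (1 + 3 * Polynomial.X + Polynomial.X ^ 2) * Polynomial.X * qintP (n + 1) ^ 4 * evenPart n ^ 4
    - (qintP (n + 2) ^ 2 + Polynomial.X * qintP (n + 1) ^ 2) * oddPart n ^ 4

noncomputable def diffDen (n : ℕ) : ℚ[X] :=
  Polynomial.X * qintP (n + 1) ^ 4 * evenPart n ^ 4

theorem diffDen_ne_zero (n : ℕ) : diffDen n ≠ 0 :=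
  mul_ne_zero (mul_ne_zero X_ne_zero (pow_ne_zero _ (qintP_ne_zero n.succ_ne_zero)))
    (pow_ne_zero _ (evenPart_ne_zero n))

theorem cyclotomic_dvd_diffNum {n : ℕ} (hn : Odd n) (hn1 : 1 < n) :
    cyclotomic n ℚ ∣ diffNum n := by
  obtain ⟨ζ, hζ⟩ : ∃ ζ : ℂ, IsPrimitiveRoot ζ n := ⟨_, Complex.isPrimitiveRoot_exp n (by omega)⟩
  rw [cyclotomic_eq_minpoly_rat hζ (by omega)]
  apply minpoly.dvd
  have h1 : aeval ζ (qintP (n + 1)) = 1 := by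
    rw [qintP_succ, map_add, aeval_qintP_of_isPrimitiveRoot hζ hn1, map_pow, aeval_X,
      hζ.pow_eq_one, zero_add]
  have h2 : aeval ζ (qintP (n + 2)) = 1 + ζ := by
    rw [qintP_succ, map_add, h1, map_pow, aeval_X, pow_succ, hζ.pow_eq_one, one_mul]
  simp only [diffNum, map_sub, map_mul, map_add, map_pow, map_one, map_ofNat, aeval_X, h1, h2,
    aeval_oddPart_pow_four hζ hn]
  ring

theorem isCoprime_diffDen_qintP {n : ℕ} (hn : n ≠ 0) : IsCoprime (diffDen n) (qintP n) := by
  rw [isCoprime_iff_aeval_ne_zero_of_isAlgClosed ℚ ℂ]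
  intro z
  by_cases h : aeval z (qintP n) = 0
  · left
    have hz : z ^ n = 1 := by
      have := aeval_qintP_mul_one_sub z n
      rw [h, zero_mul] at this
      linear_combination this
    have hz0 : z ≠ 0 := by rintro rfl; simp [hn] at hz
    have h1 : aeval z (qintP (n + 1)) = 1 := by
      rw [qintP_succ, map_add, h, map_pow, aeval_X, hz, zero_add]
    simp [diffDen, h1, hz0, aeval_evenPart_ne_zero hz]
  · exact Or.inr h

theorem isCoprime_diffDen {n : ℕ} (hn1 : 1 < n) :
    IsCoprime (diffDen n) (qintP n * cyclotomic n ℚ) :=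
  have h := isCoprime_diffDen_qintP (n := n) (by omega)
  h.mul_right (h.of_isCoprime_of_dvd_right (cyclotomic_dvd_geom_sum_of_dvd ℚ dvd_rfl hn1.ne'))

end Divisibility

section Assembly

theorem algebraMap_qintP (k : ℕ) : algebraMap ℚ[X] (RatFunc ℚ) (qintP k) = qint k := by
  simp [qint, qintP, q]

theorem qpoch_q_q_sq (m : ℕ) : qpoch q (q ^ 2) m
    = algebraMap ℚ[X] (RatFunc ℚ) (∏ j ∈ range m, (1 - Polynomial.X ^ (2 * j + 1))) := by
  rw [qpoch, map_prod]
  refine prod_congr rfl fun j _ => ?_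
  simp only [map_sub, map_one, map_pow, algebraMap_X_eq_q]
  ring

theorem qpoch_q_sq_q_sq (m : ℕ) : qpoch (q ^ 2) (q ^ 2) m
    = algebraMap ℚ[X] (RatFunc ℚ) (∏ j ∈ range m, (1 - Polynomial.X ^ (2 * j + 2))) := by
  rw [qpoch, map_prod]
  refine prod_congr rfl fun j _ => ?_
  simp only [map_sub, map_one, map_pow, algebraMap_X_eq_q]
  ring

theorem qpoch_q_q_sq_half {n : ℕ} (hn : Odd n) : qpoch q (q ^ 2) ((n + 1) / 2)
    = algebraMap ℚ[X] (RatFunc ℚ) (gcdPart n * oddPart n * (qintP n * (1 - Polynomial.X))) := by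
  obtain ⟨k, rfl⟩ := hn
  rw [qpoch_q_q_sq, ← prod_one_sub_X_pow_odd, qintP_mul_one_sub_X,
    show (2 * k + 1 + 1) / 2 = k + 1 by omega, show (2 * k + 1) / 2 = k by omega, prod_range_succ]

theorem qpoch_q_sq_q_sq_half {n : ℕ} (hn : Odd n) : qpoch (q ^ 2) (q ^ 2) ((n + 1) / 2)
    = algebraMap ℚ[X] (RatFunc ℚ)
        (gcdPart n * evenPart n * (qintP (n + 1) * (1 - Polynomial.X))) := by
  obtain ⟨k, rfl⟩ := hn
  rw [qpoch_q_sq_q_sq, ← prod_one_sub_X_pow_even ⟨k, rfl⟩, qintP_mul_one_sub_X,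
    show (2 * k + 1 + 1) / 2 = k + 1 by omega, show (2 * k + 1) / 2 = k by omega, prod_range_succ]

theorem sum_sub_eq_div {n : ℕ} (hn : Odd n) :
    (∑ k ∈ range ((n + 1) / 2 + 1),
        qintZ (4 * k - 1) * qpoch q⁻¹ (q ^ 2) k ^ 4 / qpoch (q ^ 2) (q ^ 2) k ^ 4 * q ^ (4 * k))
      - -(1 + 3 * q + q ^ 2) * qint n ^ 4
    = algebraMap ℚ[X] (RatFunc ℚ) (qintP n ^ 4 * diffNum n)
        / algebraMap ℚ[X] (RatFunc ℚ) (diffDen n) := by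
  have hG := RatFunc.algebraMap_ne_zero (gcdPart_ne_zero n)
  have hE := RatFunc.algebraMap_ne_zero (evenPart_ne_zero n)
  have hQ := RatFunc.algebraMap_ne_zero (qintP_ne_zero n.succ_ne_zero)
  have hq := q_ne_zero
  have hq1 := one_sub_q_ne_zero
  rw [sum_eq_closed_form, qpoch_q_q_sq_half hn, qpoch_q_sq_q_sq_half hn,
    show 2 * ((n + 1) / 2) + 1 = n + 2 by grind, show 2 * ((n + 1) / 2) = n + 1 by grind]
  simp only [← algebraMap_qintP, diffNum, diffDen, map_mul, map_sub, map_add, map_pow, map_one,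
    map_ofNat, algebraMap_X_eq_q]
  field_simp
  ring

end Assembly

theorem supercongruence_half (n : ℕ) (hn : Odd n) (hn1 : 1 < n) :
    ∃ N D : Polynomial ℚ,
      IsCoprime D (qintP n * Polynomial.cyclotomic n ℚ) ∧
      algebraMap (Polynomial ℚ) (RatFunc ℚ) D *
          ((∑ k ∈ Finset.range ((n + 1) / 2 + 1),
              qintZ (4 * k - 1) * qpoch q⁻¹ (q ^ 2) k ^ 4 / qpoch (q ^ 2) (q ^ 2) k ^ 4 *
                q ^ (4 * k))
            - (-(1 + 3 * q + q ^ 2) * qint n ^ 4))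
        = algebraMap (Polynomial ℚ) (RatFunc ℚ) N ∧
      qintP n ^ 4 * Polynomial.cyclotomic n ℚ ∣ N := by
  refine ⟨qintP n ^ 4 * diffNum n, diffDen n, isCoprime_diffDen hn1, ?_,
    mul_dvd_mul_left _ (cyclotomic_dvd_diffNum hn hn1)⟩
  rw [sum_sub_eq_div hn, mul_div_cancel₀ _ (RatFunc.algebraMap_ne_zero (diffDen_ne_zero n))]
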